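/- arXiv:1901.08468 — 4 statements merged into one kernel-verified Lean document; each statement's English description precedes it below -/
import Mathlib

section
/- For all n ≥ 1, n·hₙ = Σ_{k=1}^{n} p_k h_{n-k}, where hₖ is the k-th complete homogeneous symmetric polynomial and p_k the k-th power sum in variables x₁,…,x_m. -/
open MvPolynomial Finset

/-!
Write `pₖ hₙ₋ₖ = Σᵢ xᵢᵏ hₙ₋ₖ`. Multiplying by `xᵢᵏ` identifies the degree `n - k` monomials with
the degree `n` monomials in which `xᵢ` occurs at least `k` times. Hence in `Σ_{k=1}^n pₖ hₙ₋ₖ`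
a degree `n` monomial in which `xᵢ` has multiplicity `μᵢ` is counted once for each `i` and
each `1 ≤ k ≤ μᵢ`, that is `Σᵢ μᵢ = n` times.
-/

namespace MvPolynomial

variable {σ R : Type*} [Fintype σ] [DecidableEq σ] [CommSemiring R]

theorem X_pow_mul_hsymm_sub (i : σ) {k n : ℕ} (hk : k ≤ n) :
    X i ^ k * hsymm σ R (n - k) =
      ∑ s : Sym σ n with k ≤ s.1.count i, (s.1.map X).prod := by
  rw [hsymm, mul_sum]
  refine sum_bij' (fun t _ => Sym.cast (Nat.add_sub_cancel' hk) ((Sym.replicate k i).append t))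
    (fun s hs => Sym.mk (s.1 - Multiset.replicate k i) ?_) ?_ ?_ ?_ ?_ ?_
  · rw [Multiset.card_sub (Multiset.le_count_iff_replicate_le.1 (mem_filter.1 hs).2)]
    simp
  · intro t _
    exact mem_filter.2 ⟨mem_univ _, by simp [Sym.coe_replicate]⟩
  · intro s _
    exact mem_univ _
  · intro t _
    ext1
    simp [Sym.coe_replicate]
  · intro s hs
    ext1
    simpa [Sym.coe_replicate] using
      add_tsub_cancel_of_le (Multiset.le_count_iff_replicate_le.1 (mem_filter.1 hs).2)
  · intro t _
    simp [Sym.coe_replicate]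

theorem sum_psum_mul_hsymm_sub_eq_sum_count_mul (n : ℕ) :
    ∑ k ∈ Icc 1 n, psum σ R k * hsymm σ R (n - k) =
      ∑ s : Sym σ n, ∑ i, (s.1.count i : MvPolynomial σ R) * (s.1.map X).prod := by
  calc ∑ k ∈ Icc 1 n, psum σ R k * hsymm σ R (n - k)
      = ∑ k ∈ Icc 1 n, ∑ i, ∑ s : Sym σ n with k ≤ s.1.count i, (s.1.map X).prod := by
        refine sum_congr rfl fun k hk => ?_
        rw [psum, sum_mul]
        exact sum_congr rfl fun i _ => X_pow_mul_hsymm_sub i (mem_Icc.1 hk).2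
    _ = ∑ i, ∑ s : Sym σ n, ∑ k ∈ Icc 1 (s.1.count i), (s.1.map X).prod := by
        rw [sum_comm]
        refine sum_congr rfl fun i _ => sum_comm' fun k s => ?_
        have : s.1.count i ≤ n := by simpa [s.2] using Multiset.count_le_card i s.1
        simp only [mem_Icc, mem_filter, mem_univ, true_and, and_true]
        omega
    _ = _ := by
        rw [sum_comm]
        simp [nsmul_eq_mul]

theorem natCast_mul_hsymm (n : ℕ) :
    (n : MvPolynomial σ R) * hsymm σ R n = ∑ k ∈ Icc 1 n, psum σ R k * hsymm σ R (n - k) := by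
  have sum_count (s : Sym σ n) : ∑ i, s.1.count i = n :=
    (Multiset.sum_count_eq_card fun i _ => mem_univ i).trans s.2
  rw [sum_psum_mul_hsymm_sub_eq_sum_count_mul, hsymm, mul_sum]
  refine sum_congr rfl fun s _ => ?_
  rw [← sum_mul, ← Nat.cast_sum, sum_count]

end MvPolynomial

theorem newton_girard_hsymm_general {R : Type*} [CommRing R] (m : ℕ) (x : Fin m → R)
    (n : ℕ) :
    (n : R) * eval x (hsymm (Fin m) R n) =
      ∑ k ∈ Icc 1 n, eval x (psum (Fin m) R k) * eval x (hsymm (Fin m) R (n - k)) := by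
  simpa using congrArg (eval x) (natCast_mul_hsymm (σ := Fin m) (R := R) n)

/-- Newton–Girard identity for complete homogeneous symmetric polynomials:
for all `n ≥ 1`, `n·hₙ = Σ_{k=1}^{n} p_k h_{n-k}` in variables `x 0, …, x (m-1)`. -/
theorem newton_girard_hsymm {R : Type*} [CommRing R] (m : ℕ) (x : Fin m → R)
    (n : ℕ) (hn : 1 ≤ n) :
    (n : R) * eval x (hsymm (Fin m) R n) =
      ∑ k ∈ Icc 1 n, eval x (psum (Fin m) R k) * eval x (hsymm (Fin m) R (n - k)) :=
  newton_girard_hsymm_general m x n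
end

section
/- For all n ≥ 1, pₙ = Σ_{k=0}^{n} (-1)^{n-k} k hₖ e_{n-k}, where eₖ, hₖ, pₖ are the elementary, complete homogeneous, and power sum symmetric polynomials in x₁,…,x_m. -/
/-!
With `H(t) = ∏ᵢ 1/(1 - xᵢt) = Σ hₖtᵏ` and `E(-t) = ∏ᵢ (1 - xᵢt) = Σ (-1)ᵏeₖtᵏ`, we have
`H(t) E(-t) = 1`, so the logarithmic derivative of `H` is computed factor by factor:
`t H'(t) E(-t) = Σᵢ xᵢt/(1 - xᵢt) = Σ_{n ≥ 1} pₙtⁿ`. Comparing coefficients of `tⁿ` gives the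
identity, since the coefficients of `t H'(t)` are `k hₖ`. The series `1/(1 - at)` is
`rescale a (mk 1)`.
-/

open Finset

theorem Derivation.map_prod_mul_prod_of_mul_eq_one {R A ι : Type*} [CommSemiring R] [CommRing A]
    [Algebra R A] (D : Derivation R A A) {g u : ι → A} (s : Finset ι)
    (hgu : ∀ i ∈ s, g i * u i = 1) :
    D (∏ i ∈ s, g i) * ∏ i ∈ s, u i = -∑ i ∈ s, g i * D (u i) := by
  classical
  induction s using Finset.induction_on with
  | empty => simp
  | insert a s ha ih =>
    have hs : ∀ i ∈ s, g i * u i = 1 := fun i hi => hgu i (mem_insert_of_mem hi)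
    have hGU : (∏ i ∈ s, g i) * ∏ i ∈ s, u i = 1 := by
      rw [← prod_mul_distrib]; exact prod_eq_one hs
    have hga : g a * u a = 1 := hgu a (mem_insert_self a s)
    have hDa : D (g a) * u a = -(g a * D (u a)) := by
      have := D.leibniz (g a) (u a)
      rw [hga, D.map_one_eq_zero, smul_eq_mul, smul_eq_mul] at this
      linear_combination -this
    rw [prod_insert ha, prod_insert ha, sum_insert ha, D.leibniz, smul_eq_mul, smul_eq_mul]
    linear_combination (g a * u a) * ih hs + (∏ i ∈ s, g i) * (∏ i ∈ s, u i) * hDa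
      - (∑ i ∈ s, g i * D (u i)) * hga - g a * D (u a) * hGU

namespace MvPolynomial

variable {σ R : Type*} [Fintype σ] [CommSemiring R]

theorem eval_hsymm [DecidableEq σ] (x : σ → R) (n : ℕ) :
    eval x (hsymm σ R n) = ∑ l ∈ univ.finsuppAntidiag n, ∏ i, x i ^ l i := by
  have card_toMultiset (l : σ →₀ ℕ) : Multiset.card l.toMultiset = ∑ i, l i := by
    rw [Finsupp.card_toMultiset, Finsupp.sum_fintype _ _ fun _ => rfl]; rfl
  rw [hsymm, map_sum]
  refine sum_bij' (fun s _ => Multiset.toFinsupp s.1)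
    (fun l hl => ⟨l.toMultiset, by simpa [card_toMultiset, mem_finsuppAntidiag] using hl⟩)
    (fun s _ => by simp [← card_toMultiset, mem_finsuppAntidiag]) (fun _ _ => mem_univ _)
    (fun s _ => by ext1; simp) (fun l _ => by simp) fun s _ => ?_
  rw [map_multiset_prod, Multiset.map_map]
  simp only [Function.comp_def, eval_X, prod_multiset_map_count, Multiset.toFinsupp_apply]
  exact prod_subset (subset_univ _) fun i _ hi => by simp_all

theorem eval_esymm (x : σ → R) (n : ℕ) :
    eval x (esymm σ R n) = ∑ t ∈ univ.powersetCard n, ∏ i ∈ t, x i := by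
  simp [esymm]

end MvPolynomial

namespace PowerSeries

variable {R : Type*} [CommRing R]

theorem coeff_X_mul_derivative (f : R⟦X⟧) (n : ℕ) :
    coeff n (X * d⁄dX R f) = n * coeff n f := by
  cases n with
  | zero => simp
  | succ n => rw [coeff_succ_X_mul, coeff_derivative]; push_cast; ring

theorem coeff_prod_one_add_C_mul_X {ι : Type*} (y : ι → R) (s : Finset ι) (n : ℕ) :
    coeff n (∏ i ∈ s, (1 + C (y i) * X)) = ∑ t ∈ s.powersetCard n, ∏ i ∈ t, y i := by
  simp_rw [prod_one_add, prod_mul_distrib, prod_const, ← map_prod, map_sum, coeff_C_mul_X_pow,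
    powersetCard_eq_filter, sum_filter, eq_comm]

theorem rescale_mk_one_mul_one_sub_C_mul_X (a : R) : rescale a (mk 1) * (1 - C a * X) = 1 := by
  rw [← rescale_X, ← map_one (rescale a), ← map_sub, ← map_mul, mk_one_mul_one_sub_eq_one, map_one]

variable {σ : Type*} [Fintype σ]

theorem coeff_prod_rescale_mk_one [DecidableEq σ] (x : σ → R) (n : ℕ) :
    coeff n (∏ i, rescale (x i) (mk 1)) = MvPolynomial.eval x (MvPolynomial.hsymm σ R n) := by
  simp [coeff_prod, MvPolynomial.eval_hsymm]

theorem coeff_prod_one_sub_C_mul_X (x : σ → R) (n : ℕ) :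
    coeff n (∏ i, (1 - C (x i) * X)) =
      (-1) ^ n * MvPolynomial.eval x (MvPolynomial.esymm σ R n) := by
  simp_rw [sub_eq_add_neg, ← neg_mul, ← map_neg, coeff_prod_one_add_C_mul_X, prod_neg,
    MvPolynomial.eval_esymm, mul_sum]
  exact sum_congr rfl fun t ht => by rw [(mem_powersetCard.1 ht).2]

theorem coeff_sum_C_mul_rescale_mk_one (x : σ → R) (n : ℕ) :
    coeff n (∑ i, C (x i) * rescale (x i) (mk 1)) =
      MvPolynomial.eval x (MvPolynomial.psum σ R (n + 1)) := by
  simp [MvPolynomial.psum, pow_succ']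

theorem X_mul_derivative_prod_rescale_mk_one_mul_prod (x : σ → R) :
    X * d⁄dX R (∏ i, rescale (x i) (mk 1)) * ∏ i, (1 - C (x i) * X) =
      X * ∑ i, C (x i) * rescale (x i) (mk 1) := by
  rw [mul_assoc, (d⁄dX R).map_prod_mul_prod_of_mul_eq_one univ
    fun i _ => rescale_mk_one_mul_one_sub_C_mul_X (x i)]
  simp [mul_comm]

end PowerSeries

open MvPolynomial

/-- Newton-type convolution: for `n ≥ 1`,
`pₙ = Σ_{k=0}^{n} (-1)^(n-k) k hₖ e_{n-k}`. -/
theorem psum_eq_convolution_hsymm_esymm {R : Type*} [CommRing R] (m : ℕ) (x : Fin m → R)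
    (n : ℕ) (hn : 1 ≤ n) :
    eval x (psum (Fin m) R n) =
      ∑ k ∈ range (n + 1), (-1 : R) ^ (n - k) * (k : R) * eval x (hsymm (Fin m) R k) *
        eval x (esymm (Fin m) R (n - k)) := by
  obtain ⟨n, rfl⟩ := Nat.exists_eq_add_of_le' hn
  have h := congrArg (PowerSeries.coeff (n + 1))
    (PowerSeries.X_mul_derivative_prod_rescale_mk_one_mul_prod x)
  rw [PowerSeries.coeff_mul, Nat.sum_antidiagonal_eq_sum_range_succ_mk,
    PowerSeries.coeff_succ_X_mul, PowerSeries.coeff_sum_C_mul_rescale_mk_one] at h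
  simp only [PowerSeries.coeff_X_mul_derivative, PowerSeries.coeff_prod_rescale_mk_one,
    PowerSeries.coeff_prod_one_sub_C_mul_X] at h
  rw [← h]
  exact sum_congr rfl fun k _ => by ring
end

section
/- For finite variable sets x and y and every k ≥ 0, Σ_{λ ⊢ k} h_λ(x) m_λ(y) = Σ_{λ ⊢ k} h_λ(y) m_λ(x). -/
/-!
Both sides equal `h_k` evaluated at the products `x i * y j`. A size-`k` multiset of pairs
`(i, j)` amounts to its multiset `s` of second coordinates together with, for each `j`, a multiset
of first coordinates of size `count j s`. Summing the monomials over this data gives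
`(∏ j, h_{count j s}(x)) * y^s = h_{shape s}(x) * y^s`, and grouping the `s` by shape gives
`∑ λ, h_λ(x) m_λ(y)`. Exchanging `x` and `y` only permutes the variables `x i * y j`.
-/

namespace Multiset

variable {σ τ : Type*}

def fiber [DecidableEq τ] (p : Multiset (σ × τ)) (j : τ) : Multiset σ :=
  (p.filter (·.2 = j)).map Prod.fst

def ofFibers [Fintype τ] (t : τ → Multiset σ) : Multiset (σ × τ) :=
  ∑ j, (t j).map (·, j)

theorem map_fst_ofFibers [Fintype τ] (t : τ → Multiset σ) :
    (ofFibers t).map Prod.fst = ∑ j, t j := by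
  rw [ofFibers, ← coe_mapAddMonoidHom, map_sum]
  simp [map_map]

variable [DecidableEq τ]

theorem card_fiber (p : Multiset (σ × τ)) (j : τ) :
    card (p.fiber j) = count j (p.map Prod.snd) := by
  simp [fiber, count_map, eq_comm]

theorem count_fiber [DecidableEq σ] (p : Multiset (σ × τ)) (a : σ) (j : τ) :
    count a (p.fiber j) = count (a, j) p := by
  rw [fiber, count_map, count_eq_card_filter_eq, filter_filter]
  congr 1
  exact filter_congr fun e _ ↦ by rw [Prod.ext_iff]; tauto

theorem count_ofFibers [Fintype τ] [DecidableEq σ] (t : τ → Multiset σ) (a : σ) (j : τ) :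
    count (a, j) (ofFibers t) = count a (t j) := by
  rw [ofFibers, count_sum', Finset.sum_eq_single j]
  · exact count_map_eq_count' _ _ (fun _ _ h ↦ congrArg Prod.fst h) a
  · intro j' _ hj'
    simp [count_map, hj'.symm]
  · simp

theorem fiber_ofFibers [Fintype τ] (t : τ → Multiset σ) : (ofFibers t).fiber = t := by
  classical
  ext j a
  rw [count_fiber, count_ofFibers]

theorem ofFibers_fiber [Fintype τ] (p : Multiset (σ × τ)) : ofFibers p.fiber = p := by
  classical
  ext ⟨a, j⟩
  rw [count_ofFibers, count_fiber]

theorem sum_fiber [Fintype τ] (p : Multiset (σ × τ)) : ∑ j, p.fiber j = p.map Prod.fst := by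
  rw [← map_fst_ofFibers, ofFibers_fiber]

theorem map_snd_eq_iff (p : Multiset (σ × τ)) (s : Multiset τ) :
    p.map Prod.snd = s ↔ ∀ j, card (p.fiber j) = count j s := by
  simp_rw [card_fiber, Multiset.ext]

end Multiset

namespace Sym

open Multiset

variable {σ τ : Type*} [DecidableEq τ] {k : ℕ}

theorem map_snd_eq_iff (p : Sym (σ × τ) k) (s : Sym τ k) :
    p.map Prod.snd = s ↔ ∀ j, card ((p : Multiset (σ × τ)).fiber j) = count j s := by
  rw [Sym.ext_iff, coe_map, Multiset.map_snd_eq_iff]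

def fiberEquiv [Fintype τ] (s : Sym τ k) :
    {p : Sym (σ × τ) k // p.map Prod.snd = s} ≃ ((j : τ) → Sym σ (count j (s : Multiset τ))) where
  toFun p j := ⟨(p.1 : Multiset (σ × τ)).fiber j, (map_snd_eq_iff _ _).1 p.2 j⟩
  invFun t :=
    have ht : (ofFibers fun j ↦ (t j : Multiset σ)).map Prod.snd = s := by
      simp [Multiset.map_snd_eq_iff, fiber_ofFibers]
    ⟨⟨ofFibers fun j ↦ t j, by rw [← card_map Prod.snd, ht, card_coe]⟩, Sym.coe_injective ht⟩
  left_inv p := by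
    ext : 2
    exact ofFibers_fiber _
  right_inv t := by
    ext j : 2
    exact congrFun (fiber_ofFibers _) j

end Sym

namespace MvPolynomial

open Multiset

variable {R : Type*} [CommSemiring R] {σ τ : Type*} [Fintype σ] [DecidableEq σ]
  [Fintype τ] [DecidableEq τ]

theorem eval_hsymm_s11 (x : σ → R) (n : ℕ) :
    eval x (hsymm σ R n) = ∑ s : Sym σ n, ((s : Multiset σ).map x).prod := by
  simp [hsymm, map_multiset_prod]

theorem eval_msymm (y : τ → R) {k : ℕ} (μ : k.Partition) :
    eval y (msymm τ R μ) =
      ∑ s : {s : Sym τ k // .ofSym s = μ}, ((s.1 : Multiset τ).map y).prod := by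
  simp [msymm, map_multiset_prod]

theorem hsymmPart_ofSym {k : ℕ} (s : Sym τ k) :
    hsymmPart σ R (.ofSym s) = ∏ j, hsymm σ R (count j (s : Multiset τ)) := by
  calc hsymmPart σ R (.ofSym s)
      = ∏ j ∈ (s : Multiset τ).toFinset, hsymm σ R (count j (s : Multiset τ)) := by
        simp [hsymmPart, Nat.Partition.ofSym, Multiset.map_map, Finset.prod_eq_multiset_prod]
    _ = _ := Finset.prod_subset (Finset.subset_univ _) fun j _ hj ↦ by
        rw [count_eq_zero_of_notMem (by simpa using hj), hsymm_zero]

theorem sum_eval_hsymmPart_mul_eval_msymm_eq_sum_sym (x : σ → R) (y : τ → R) (k : ℕ) :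
    ∑ μ : k.Partition, eval x (hsymmPart σ R μ) * eval y (msymm τ R μ) =
      ∑ s : Sym τ k, eval x (hsymmPart σ R (.ofSym s)) * ((s : Multiset τ).map y).prod := by
  rw [← Fintype.sum_fiberwise fun s : Sym τ k ↦ Nat.Partition.ofSym s]
  refine Finset.sum_congr rfl fun μ _ ↦ ?_
  rw [eval_msymm, Finset.mul_sum]
  exact Finset.sum_congr rfl fun s _ ↦ by rw [s.2]

theorem sum_prod_map_of_map_snd_eq (x : σ → R) (y : τ → R) {k : ℕ} (s : Sym τ k) :
    ∑ p : {p : Sym (σ × τ) k // p.map Prod.snd = s},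
        ((p.1 : Multiset (σ × τ)).map fun e ↦ x e.1 * y e.2).prod =
      (∏ j, eval x (hsymm σ R (count j (s : Multiset τ)))) * ((s : Multiset τ).map y).prod := by
  simp_rw [eval_hsymm_s11, Finset.prod_univ_sum, Fintype.piFinset_univ, Finset.sum_mul]
  refine Fintype.sum_equiv (Sym.fiberEquiv s) _ _ fun p ↦ ?_
  have hp : (p.1 : Multiset (σ × τ)).map Prod.snd = s := by rw [← Sym.coe_map, p.2]
  have hx : ∏ j, ((Sym.fiberEquiv s p j : Multiset σ).map x).prod =
      (((p.1 : Multiset (σ × τ)).map Prod.fst).map x).prod := by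
    rw [← sum_fiber, ← coe_mapAddMonoidHom, map_sum, prod_sum]
    rfl
  rw [prod_map_mul, hx, ← hp, Multiset.map_map, Multiset.map_map]
  rfl

theorem sum_eval_hsymmPart_mul_eval_msymm (x : σ → R) (y : τ → R) (k : ℕ) :
    ∑ μ : k.Partition, eval x (hsymmPart σ R μ) * eval y (msymm τ R μ) =
      eval (fun e : σ × τ ↦ x e.1 * y e.2) (hsymm (σ × τ) R k) := by
  rw [sum_eval_hsymmPart_mul_eval_msymm_eq_sum_sym, eval_hsymm_s11,
    ← Fintype.sum_fiberwise fun p : Sym (σ × τ) k ↦ p.map Prod.snd]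
  simp_rw [sum_prod_map_of_map_snd_eq, hsymmPart_ofSym, map_prod]

end MvPolynomial

open MvPolynomial

/-- Symmetry: `Σ_{λ ⊢ k} h_λ(x) m_λ(y) = Σ_{λ ⊢ k} h_λ(y) m_λ(x)`. -/
theorem hsymm_msymm_symmetry {R : Type*} [CommRing R] (m l : ℕ)
    (x : Fin m → R) (y : Fin l → R) (k : ℕ) :
    ∑ μ : Nat.Partition k, eval x (hsymmPart (Fin m) R μ) * eval y (msymm (Fin l) R μ) =
      ∑ μ : Nat.Partition k, eval y (hsymmPart (Fin l) R μ) * eval x (msymm (Fin m) R μ) := by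
  rw [sum_eval_hsymmPart_mul_eval_msymm, sum_eval_hsymmPart_mul_eval_msymm,
    ← rename_hsymm _ _ k (Equiv.prodComm (Fin l) (Fin m)), eval_rename]
  congr with e
  exact mul_comm _ _
end

section
/- For finite variable sets x and y and every n ≥ 1, n · Σ_{λ ⊢ n} h_λ(x) m_λ(y) = Σ_{k=0}^{n-1} p_{n-k}(x) p_{n-k}(y) · Σ_{λ ⊢ k} h_λ(x) m_λ(y). -/
open MvPolynomial Finset

/-!
With `θ = X • d/dX` the Euler derivation on `R⟦X⟧`, the generating function
`H(t) = ∑ hₙ(x) tⁿ = ∏ᵢ (1 - xᵢ t)⁻¹` satisfies `θ H = P H` with `P(t) = ∑_{n ≥ 1} pₙ(x) tⁿ`,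
because each geometric factor does. Since `θ` commutes with `t ↦ c t` and is a derivation,
`G(t) = ∏ⱼ H(yⱼ t)` satisfies `θ G = (∑ⱼ P(yⱼ t)) G`, and `∑ⱼ P(yⱼ t) = ∑_{n ≥ 1} pₙ(x) pₙ(y) tⁿ`.
Comparing coefficients of `tⁿ` gives the identity, since by the Cauchy-type expansion
`[tⁿ] G = ∑_{c ⊨ n} ∏ⱼ yⱼ^{cⱼ} h_{cⱼ}(x) = ∑_{λ ⊢ n} h_λ(x) m_λ(y)`, the compositions `c`
being grouped by their underlying partition.
-/

theorem Derivation.leibniz_prod_of_eq_mul {R A ι : Type*} [CommSemiring R] [CommSemiring A]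
    [Algebra R A] (D : Derivation R A A) (s : Finset ι) (f a : ι → A)
    (h : ∀ i ∈ s, D (f i) = a i * f i) :
    D (∏ i ∈ s, f i) = (∑ i ∈ s, a i) * ∏ i ∈ s, f i := by
  classical
  induction s using Finset.induction_on with
  | empty => simp
  | insert i s hi ih =>
    rw [prod_insert hi, sum_insert hi, D.leibniz, smul_eq_mul, smul_eq_mul,
      ih fun j hj => h j (mem_insert_of_mem hj), h i (mem_insert_self i s)]
    ring

section Multiplicities

variable {σ : Type*} [Fintype σ] [DecidableEq σ]

theorem Multiset.prod_toFinset_count_eq_prod_univ {M : Type*} [CommMonoid M] (s : Multiset σ)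
    (g : σ → ℕ → M) (hg : ∀ j, g j 0 = 1) :
    ∏ j ∈ s.toFinset, g j (s.count j) = ∏ j, g j (s.count j) :=
  prod_subset (subset_univ _) fun j _ hj => by
    rw [Multiset.count_eq_zero_of_notMem (by simpa using hj), hg]

theorem Multiset.prod_map_eq_prod_univ_pow_count {M : Type*} [CommMonoid M] (s : Multiset σ)
    (f : σ → M) : (s.map f).prod = ∏ j, f j ^ s.count j := by
  rw [prod_multiset_map_count,
    s.prod_toFinset_count_eq_prod_univ (fun j k => f j ^ k) fun _ => pow_zero _]

theorem Finset.sum_finsuppAntidiag_univ_eq_sum_sym {M : Type*} [AddCommMonoid M] (n : ℕ)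
    (f : (σ →₀ ℕ) → M) :
    ∑ c ∈ finsuppAntidiag univ n, f c = ∑ s : Sym σ n, f (Multiset.toFinsupp s.1) := by
  let := Fintype.ofEquiv _ (Sym.equivNatSum σ n)
  rw [sum_subtype (p := fun c : σ →₀ ℕ => c.sum (fun _ => id) = n) _ fun c => by
      simp [Finsupp.sum_fintype], ← (Sym.equivNatSum σ n).sum_comp]
  rfl

theorem MvPolynomial.hsymmPart_ofSym_s13 {R : Type*} [CommSemiring R] {τ : Type*} [Fintype τ]
    [DecidableEq τ] {n : ℕ} (s : Sym σ n) :
    hsymmPart τ R (.ofSym s) = ∏ j, hsymm τ R (s.1.count j) := by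
  rw [← s.1.prod_toFinset_count_eq_prod_univ (fun _ k => hsymm τ R k) fun _ => hsymm_zero τ R,
    hsymmPart, Nat.Partition.ofSym, Multiset.map_map]
  rfl

end Multiplicities

namespace PowerSeries

variable {R : Type*} [CommSemiring R]

variable (R) in
noncomputable def eulerDerivation : Derivation R R⟦X⟧ R⟦X⟧ := (X : R⟦X⟧) • d⁄dX R

theorem coeff_eulerDerivation (f : R⟦X⟧) (n : ℕ) :
    coeff n (eulerDerivation R f) = n * coeff n f := by
  cases n with
  | zero => simp [eulerDerivation]
  | succ n => simp [eulerDerivation, coeff_succ_X_mul, coeff_derivative, mul_comm]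

theorem eulerDerivation_rescale (a : R) (f : R⟦X⟧) :
    eulerDerivation R (rescale a f) = rescale a (eulerDerivation R f) := by
  ext n
  simp only [coeff_eulerDerivation, coeff_rescale]
  ring

theorem eulerDerivation_mk_one : eulerDerivation R (mk 1) = X * mk 1 * mk 1 := by
  ext (_ | n)
  · simp [coeff_eulerDerivation]
  · rw [coeff_eulerDerivation, mul_assoc, coeff_succ_X_mul, coeff_mul]
    simp

theorem coeff_prod_univ_eq_sum_sym {σ : Type*} [Fintype σ] [DecidableEq σ] (f : σ → R⟦X⟧)
    (n : ℕ) : coeff n (∏ j, f j) = ∑ s : Sym σ n, ∏ j, coeff (s.1.count j) (f j) := by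
  rw [coeff_prod, sum_finsuppAntidiag_univ_eq_sum_sym]
  rfl

variable {σ τ : Type*} [Fintype σ] [Fintype τ]

/-- `psum σ R 0` is the number of variables, so the constant term is set to `0` by hand. -/
noncomputable def psumSeries (x : σ → R) : R⟦X⟧ :=
  mk fun n => if n = 0 then 0 else eval x (psum σ R n)

theorem sum_rescale_X_mul_mk_one (x : σ → R) :
    ∑ i, rescale (x i) (X * mk 1) = psumSeries x := by
  ext (_ | n) <;> simp only [map_sum, coeff_rescale, psumSeries, coeff_mk]
  · simp
  · simp [coeff_succ_X_mul, psum]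

theorem coeff_sum_rescale_psumSeries (x : σ → R) (y : τ → R) {n : ℕ} (hn : n ≠ 0) :
    coeff n (∑ j, rescale (y j) (psumSeries x)) = eval x (psum σ R n) * eval y (psum τ R n) := by
  simp [psumSeries, coeff_rescale, hn, psum, ← sum_mul, mul_comm]

variable [DecidableEq σ]

noncomputable def hsymmSeries (x : σ → R) : R⟦X⟧ := mk fun n => eval x (hsymm σ R n)

theorem prod_rescale_mk_one (x : σ → R) : ∏ i, rescale (x i) (mk 1) = hsymmSeries x := by
  ext n
  rw [coeff_prod_univ_eq_sum_sym, hsymmSeries, coeff_mk, hsymm, map_sum]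
  refine sum_congr rfl fun s _ => ?_
  simp [coeff_rescale, Multiset.prod_map_eq_prod_univ_pow_count]

theorem eulerDerivation_hsymmSeries (x : σ → R) :
    eulerDerivation R (hsymmSeries x) = psumSeries x * hsymmSeries x := by
  rw [← prod_rescale_mk_one, ← sum_rescale_X_mul_mk_one]
  exact (eulerDerivation R).leibniz_prod_of_eq_mul _ _ _ fun i _ => by
    rw [eulerDerivation_rescale, eulerDerivation_mk_one, map_mul]

theorem eulerDerivation_prod_rescale_hsymmSeries (x : σ → R) (y : τ → R) :
    eulerDerivation R (∏ j, rescale (y j) (hsymmSeries x)) =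
      (∏ j, rescale (y j) (hsymmSeries x)) * ∑ j, rescale (y j) (psumSeries x) := by
  rw [mul_comm]
  exact (eulerDerivation R).leibniz_prod_of_eq_mul _ _ _ fun j _ => by
    rw [eulerDerivation_rescale, eulerDerivation_hsymmSeries, map_mul]

variable [DecidableEq τ]

theorem coeff_prod_rescale_hsymmSeries (x : σ → R) (y : τ → R) (n : ℕ) :
    coeff n (∏ j, rescale (y j) (hsymmSeries x)) =
      ∑ μ : n.Partition, eval x (hsymmPart σ R μ) * eval y (msymm τ R μ) := by
  rw [coeff_prod_univ_eq_sum_sym, ← Fintype.sum_fiberwise fun s : Sym τ n => Nat.Partition.ofSym s]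
  refine sum_congr rfl fun μ _ => ?_
  rw [msymm, map_sum, mul_sum]
  refine sum_congr rfl fun ⟨s, hs⟩ _ => ?_
  subst hs
  simp [coeff_rescale, hsymmSeries, hsymmPart_ofSym_s13,
    Multiset.prod_map_eq_prod_univ_pow_count, prod_mul_distrib, mul_comm]

end PowerSeries

theorem generalized_newton_girard_hsymm_general {R : Type*} [CommRing R] (m l : ℕ)
    (x : Fin m → R) (y : Fin l → R) (n : ℕ) :
    (n : R) * ∑ μ : Nat.Partition n,
        eval x (hsymmPart (Fin m) R μ) * eval y (msymm (Fin l) R μ) =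
      ∑ k ∈ range n, eval x (psum (Fin m) R (n - k)) * eval y (psum (Fin l) R (n - k)) *
        ∑ μ : Nat.Partition k, eval x (hsymmPart (Fin m) R μ) * eval y (msymm (Fin l) R μ) := by
  simp only [← PowerSeries.coeff_prod_rescale_hsymmSeries]
  set G := ∏ j, PowerSeries.rescale (y j) (PowerSeries.hsymmSeries x)
  set P := ∑ j, PowerSeries.rescale (y j) (PowerSeries.psumSeries x)
  have hP₀ : PowerSeries.coeff 0 P = 0 := by simp [P, PowerSeries.psumSeries]
  rw [← PowerSeries.coeff_eulerDerivation, PowerSeries.eulerDerivation_prod_rescale_hsymmSeries,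
    PowerSeries.coeff_mul, Nat.sum_antidiagonal_eq_sum_range_succ fun i j =>
      PowerSeries.coeff i G * PowerSeries.coeff j P,
    sum_range_succ, Nat.sub_self, hP₀, mul_zero, add_zero]
  exact sum_congr rfl fun k hk => by
    rw [PowerSeries.coeff_sum_rescale_psumSeries x y (by grind), mul_comm]

/-- Generalized Newton–Girard identity (Theorem 4, first):
`n·Σ_{λ ⊢ n} h_λ(x) m_λ(y) = Σ_{k=0}^{n-1} p_{n-k}(x) p_{n-k}(y) Σ_{λ ⊢ k} h_λ(x) m_λ(y)`. -/
theorem generalized_newton_girard_hsymm {R : Type*} [CommRing R] (m l : ℕ)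
    (x : Fin m → R) (y : Fin l → R) (n : ℕ) (hn : 1 ≤ n) :
    (n : R) * ∑ μ : Nat.Partition n,
        eval x (hsymmPart (Fin m) R μ) * eval y (msymm (Fin l) R μ) =
      ∑ k ∈ range n, eval x (psum (Fin m) R (n - k)) * eval y (psum (Fin l) R (n - k)) *
        ∑ μ : Nat.Partition k, eval x (hsymmPart (Fin m) R μ) * eval y (msymm (Fin l) R μ) :=
  generalized_newton_girard_hsymm_general m l x y n
end
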